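/- arXiv:2509.05413 — 2 statements merged into one kernel-verified Lean document; each statement's English description precedes it below -/
import Mathlib

section
/- Let M be a set with a preorder ≼, and define J(q) = {p | p ≼ q ∨ q ≼ p} and J[S] = ⋃_{p∈S} J(p). If D[S] denotes the set of q such that every maximal chain through q intersects S, then D[S] ⊆ {q ∈ M | J(q) ⊆ J[S]}. -/
/-- Full causal cone of a point. -/
def Jpt {M : Type*} [Preorder M] (q : M) : Set M := {p | p ≤ q ∨ q ≤ p}

/-- Full causal cone of a set. -/
def Jset {M : Type*} [Preorder M] (S : Set M) : Set M := ⋃ p ∈ S, Jpt p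

/-- Domain of dependence: points all of whose maximal chains meet `S`. -/
def DD {M : Type*} [Preorder M] (S : Set M) : Set M :=
  {q | ∀ c : Set M, IsMaxChain (· ≤ ·) c → q ∈ c → (c ∩ S).Nonempty}

/-- Every point of `D[S]` has its full causal cone contained in `J[S]`. -/
theorem stmt7 {M : Type*} [Preorder M] (S : Set M) :
    DD S ⊆ {q : M | Jpt q ⊆ Jset S} := by
  intro q hq p hp
  have hchain : IsChain (· ≤ ·) ({p, q} : Set M) := by
    intro a ha b hb hab
    rcases ha with rfl | ha <;> rcases hb with rfl | hb
    · exact absurd rfl hab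
    · cases hb; exact hp.imp id id
    · cases ha; exact hp.symm.imp id id
    · cases ha; cases hb; exact absurd rfl hab
  obtain ⟨c, hc, hsub⟩ := hchain.exists_maxChain
  obtain ⟨s, hsc, hsS⟩ := hq c hc (hsub (by simp))
  have hpc : p ∈ c := hsub (by simp)
  have : p ≤ s ∨ s ≤ p := by
    by_cases h : p = s
    · exact Or.inl h.le
    · exact hc.1 hpc hsc h
  exact Set.mem_biUnion hsS this
end

section
/- Let M be a partially ordered set in which every maximal chain intersects the antichain Σ exactly once. For C ⊆ Σ, define the causal complement C′ = {q ∈ M | q is incomparable to every point of C} and D[S] = {q | every maximal chain through q meets S}. Then D[C] ⊆ C′′ ∪ C, i.e., every point of the domain of dependence of C is causally incomparable to every point that is incomparable to all of C. -/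
/-- Causal complement: points incomparable to every point of `S`. -/
def cprime {M : Type*} [Preorder M] (S : Set M) : Set M :=
  {q | ∀ p ∈ S, ¬ p ≤ q ∧ ¬ q ≤ p}

/-- `Σ` is a Cauchy antichain: an antichain met by every maximal chain in exactly
one point. -/
def IsCauchyAntichain {M : Type*} [Preorder M] (Sig : Set M) : Prop :=
  (∀ p ∈ Sig, ∀ q ∈ Sig, p ≤ q → p = q) ∧
    ∀ c : Set M, IsMaxChain (· ≤ ·) c → ∃! x, x ∈ c ∩ Sig

/-- One inclusion of Lemma A.5: `D[C] ⊆ C′′ ∪ C`. -/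
theorem stmt12 {M : Type*} [PartialOrder M] (Sig C : Set M)
    (hSig : IsCauchyAntichain Sig) (hC : C ⊆ Sig) :
    DD C ⊆ cprime (cprime C) ∪ C := by
  intro q hq
  left
  intro p hp
  -- `p` is incomparable to every point of `C`; show `p` incomparable to `q`.
  constructor <;> intro hle
  all_goals {
    have hchain : IsChain (· ≤ ·) ({p, q} : Set M) := by
      intro a ha b hb hne
      simp only [Set.mem_insert_iff, Set.mem_singleton_iff] at ha hb
      rcases ha with rfl | rfl <;> rcases hb with rfl | rfl <;>
        first
        | exact absurd rfl hne
        | exact Or.inl hle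
        | exact Or.inr hle
    obtain ⟨c, hc, hsub⟩ := hchain.exists_maxChain
    obtain ⟨x, hxc, hxC⟩ := hq c hc (hsub (by simp))
    have hpc : p ∈ c := hsub (by simp)
    have hcomp : p ≤ x ∨ x ≤ p := by
      rcases eq_or_ne p x with rfl | hne
      · exact Or.inl le_rfl
      · rcases hc.1 hpc hxc hne with h | h
        · exact Or.inl h
        · exact Or.inr h
    rcases hcomp with h | h
    · exact (hp x hxC).2 h
    · exact (hp x hxC).1 h
  }
end
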